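/- arXiv:1302.5733 — 3 statements merged into one kernel-verified Lean document; each statement's English description precedes it below -/
import Mathlib

section
/- Let P₁ and P₂ be orthogonal projections on a finite-dimensional complex inner product space, and let x be a real number with 0 ≤ x ≤ 1. Then xP₁ + P₂ ≥ (x/(1+x))·(1−P₁)P₂(1−P₁) in the Loewner (positive semidefinite) order. -/
open scoped ComplexOrder Matrix

/-! The operator is a sum of two hermitian squares, `x X*X + (1+x)⁻¹ Y*Y` with
`X = (1 - P₂) P₁` and `Y = P₂ (1 + x P₁)`; expanding both sides uses only `Pᵢ² = Pᵢ = Pᵢ*`. -/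

theorem IsStarProjection.smul_add_sub_eq_sum_star_mul_self {A : Type*} [Ring A] [StarRing A]
    [Algebra ℝ A] [StarModule ℝ A] {P Q : A} (hP : IsStarProjection P) (hQ : IsStarProjection Q)
    {t : ℝ} (ht : 1 + t ≠ 0) :
    t • P + Q - (t / (1 + t)) • ((1 - P) * Q * (1 - P)) =
      t • (star ((1 - Q) * P) * ((1 - Q) * P)) +
        (1 + t)⁻¹ • (star (Q * (1 + t • P)) * (Q * (1 + t • P))) := by
  have hPP : P * P = P := hP.isIdempotentElem
  have hQQ : Q * Q = Q := hQ.isIdempotentElem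
  have hQQ' : ∀ X, Q * (Q * X) = Q * X := fun X => by rw [← mul_assoc, hQQ]
  simp only [star_mul, star_add, star_sub, star_one, star_smul, star_trivial,
    hP.isSelfAdjoint.star_eq, hQ.isSelfAdjoint.star_eq]
  simp only [mul_add, add_mul, mul_sub, sub_mul, mul_one, one_mul, mul_smul_comm, smul_mul_assoc,
    mul_assoc, hQQ', hPP, hQQ]
  match_scalars <;> field_simp <;> ring

theorem stmt_0_general {m : ℕ} (P₁ P₂ : Matrix (Fin m) (Fin m) ℂ)
    (h₁ : P₁.IsHermitian) (h₁' : P₁ * P₁ = P₁)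
    (h₂ : P₂.IsHermitian) (h₂' : P₂ * P₂ = P₂)
    (x : ℝ) (hx0 : 0 ≤ x) :
    ((x : ℂ) • P₁ + P₂ -
      ((x / (1 + x) : ℝ) : ℂ) • ((1 - P₁) * P₂ * (1 - P₁))).PosSemidef := by
  simp only [Complex.coe_smul]
  rw [IsStarProjection.smul_add_sub_eq_sum_star_mul_self ⟨h₁', h₁⟩ ⟨h₂', h₂⟩ (by positivity)]
  exact ((Matrix.posSemidef_conjTranspose_mul_self _).smul hx0).add
    ((Matrix.posSemidef_conjTranspose_mul_self _).smul (by positivity))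

theorem stmt_0 {m : ℕ} (P₁ P₂ : Matrix (Fin m) (Fin m) ℂ)
    (h₁ : P₁.IsHermitian) (h₁' : P₁ * P₁ = P₁)
    (h₂ : P₂.IsHermitian) (h₂' : P₂ * P₂ = P₂)
    (x : ℝ) (hx0 : 0 ≤ x) (hx1 : x ≤ 1) :
    ((x : ℂ) • P₁ + P₂ -
      ((x / (1 + x) : ℝ) : ℂ) • ((1 - P₁) * P₂ * (1 - P₁))).PosSemidef :=
  stmt_0_general P₁ P₂ h₁ h₁' h₂ h₂' x hx0
end

section
/- Let P₁ and P₂ be orthogonal projections on a finite-dimensional complex inner product space, and let α be a real number with 0 ≤ α ≤ 1. Then P₁ + P₂ ≥ α·P₁ + ((1−α)/(2−α))·(1−P₁)P₂(1−P₁) in the Loewner order. -/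
/-!
Write `s = 1 - α`. For idempotents `p`, `q` one has `(p - q)² = p(1 - q)p + (1 - p)q(1 - p)` and
`(1 + s)(s p + q) = (s p + q)² + s (p - q)²`. Hence
`p + q - α p - (s / (1 + s)) (1 - p)q(1 - p) = (s p + q)² / (1 + s) + (s / (1 + s)) p(1 - q)p`,
a sum of a square and a conjugate of `1 - q`, both nonnegative when `p`, `q` are self-adjoint.
-/

open scoped ComplexOrder MatrixOrder

namespace IsIdempotentElem

variable {A : Type*} [Ring A] {p q : A}

theorem sub_sq (hp : IsIdempotentElem p) (hq : IsIdempotentElem q) :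
    (p - q) ^ 2 = p * (1 - q) * p + (1 - p) * q * (1 - p) := by
  have hp' : p * p = p := hp
  have hq' : q * q = q := hq
  simp only [sq, mul_sub, sub_mul, mul_one, one_mul, hp', hq']
  noncomm_ring

theorem one_add_smul_smul_add_eq {R : Type*} [CommRing R] [Algebra R A]
    (hp : IsIdempotentElem p) (hq : IsIdempotentElem q) (s : R) :
    (1 + s) • (s • p + q) = (s • p + q) ^ 2 + s • (p - q) ^ 2 := by
  have hp' : p * p = p := hp
  have hq' : q * q = q := hq
  simp only [sq, add_mul, mul_add, sub_mul, mul_sub, smul_mul_assoc, mul_smul_comm, smul_smul,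
    hp', hq', smul_add, smul_sub, add_smul]
  module

end IsIdempotentElem

namespace IsStarProjection

variable {A : Type*} [Ring A] [StarRing A] [PartialOrder A] [StarOrderedRing A] [Algebra ℝ A]
  [StarModule ℝ A] {p q : A}

theorem smul_add_smul_conj_one_sub_le_add (hp : IsStarProjection p) (hq : IsStarProjection q)
    {α : ℝ} (hα : α ≤ 1) :
    α • p + ((1 - α) / (2 - α)) • ((1 - p) * q * (1 - p)) ≤ p + q := by
  set s := 1 - α
  have hs : 0 ≤ s := sub_nonneg.mpr hα
  have hs1 : 1 + s ≠ 0 := by positivity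
  have hsq : 0 ≤ (s • p + q) ^ 2 :=
    (((IsSelfAdjoint.all s).smul hp.isSelfAdjoint).add hq.isSelfAdjoint).sq_nonneg
  have hconj : 0 ≤ p * (1 - q) * p := hp.isSelfAdjoint.conjugate_nonneg hq.one_sub_nonneg
  have key : p + q - (α • p + (s / (1 + s)) • ((1 - p) * q * (1 - p))) =
      (1 + s)⁻¹ • (s • p + q) ^ 2 + (s / (1 + s)) • (p * (1 - q) * p) := by
    have h := hp.isIdempotentElem.one_add_smul_smul_add_eq hq.isIdempotentElem s
    rw [hp.isIdempotentElem.sub_sq hq.isIdempotentElem] at h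
    rw [eq_sub_of_add_eq h.symm]
    match_scalars <;> field_simp <;> ring
  rw [show (2 : ℝ) - α = 1 + s by ring, ← sub_nonneg, key]
  exact add_nonneg (smul_nonneg (by positivity) hsq) (smul_nonneg (by positivity) hconj)

end IsStarProjection

theorem stmt_1_general {m : ℕ} (P₁ P₂ : Matrix (Fin m) (Fin m) ℂ)
    (h₁ : P₁.IsHermitian) (h₁' : P₁ * P₁ = P₁)
    (h₂ : P₂.IsHermitian) (h₂' : P₂ * P₂ = P₂)
    (α : ℝ) (hα1 : α ≤ 1) :
    (P₁ + P₂ -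
      (((α : ℂ) • P₁ +
        (((1 - α) / (2 - α) : ℝ) : ℂ) • ((1 - P₁) * P₂ * (1 - P₁))))).PosSemidef := by
  have hP₁ : IsStarProjection P₁ := ⟨h₁', h₁⟩
  have hP₂ : IsStarProjection P₂ := ⟨h₂', h₂⟩
  rw [← Matrix.nonneg_iff_posSemidef, sub_nonneg, Complex.coe_smul, Complex.coe_smul]
  exact hP₁.smul_add_smul_conj_one_sub_le_add hP₂ hα1

theorem stmt_1 {m : ℕ} (P₁ P₂ : Matrix (Fin m) (Fin m) ℂ)
    (h₁ : P₁.IsHermitian) (h₁' : P₁ * P₁ = P₁)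
    (h₂ : P₂.IsHermitian) (h₂' : P₂ * P₂ = P₂)
    (α : ℝ) (hα0 : 0 ≤ α) (hα1 : α ≤ 1) :
    (P₁ + P₂ -
      (((α : ℂ) • P₁ +
        (((1 - α) / (2 - α) : ℝ) : ℂ) • ((1 - P₁) * P₂ * (1 - P₁))))).PosSemidef :=
  stmt_1_general P₁ P₂ h₁ h₁' h₂ h₂' α hα1
end

section
/- Let P₁ and P₂ be orthogonal projections on a finite-dimensional complex inner product space and let α ∈ [0,1]. Then (1/2)P₁ + P₂ ≥ (α/2)P₁ + ((1−α)/(3−α))·(1−P₁)P₂(1−P₁) in the Loewner order. -/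
open scoped ComplexOrder
open Matrix

/-!
With `r = (1 - α) / (3 - α)`, the difference of the two sides equals `(2 (3 - α))⁻¹ • Y² + r • Z Zᴴ`,
where `Y = (1 - α) P₁ + 2 P₂` is hermitian and `Z = P₁ (1 - P₂)`: expanding both sides modulo
`P₁² = P₁` and `P₂² = P₂` reduces this to scalar identities. Each summand is positive semidefinite.
-/

theorem IsIdempotentElem.half_smul_add_sub_eq {K A : Type*} [Field K] [CharZero K] [Ring A]
    [Algebra K A] {p q : A} (hp : IsIdempotentElem p) (hq : IsIdempotentElem q) {α : K}
    (hα : 3 - α ≠ 0) :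
    (1 / 2 : K) • p + q - ((α / 2) • p + ((1 - α) / (3 - α)) • ((1 - p) * q * (1 - p))) =
      (2 * (3 - α))⁻¹ • (((1 - α) • p + (2 : K) • q) * ((1 - α) • p + (2 : K) • q)) +
        ((1 - α) / (3 - α)) • (p * (1 - q) * ((1 - q) * p)) := by
  have hq' (x : A) : q * (q * x) = q * x := by rw [← mul_assoc, hq.eq]
  simp only [mul_add, add_mul, mul_sub, sub_mul, one_mul, mul_one, smul_mul_assoc,
      mul_smul_comm, smul_smul, mul_assoc, hp.eq, hq.eq, hq', smul_add, smul_sub]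
  match_scalars <;> field_simp <;> ring

namespace Matrix

variable {n R : Type*} [Fintype n] [Ring R] [PartialOrder R] [StarRing R] [StarOrderedRing R]

theorem IsHermitian.posSemidef_mul_self {A : Matrix n n R} (hA : A.IsHermitian) :
    (A * A).PosSemidef := by
  simpa only [hA.eq] using posSemidef_conjTranspose_mul_self A

theorem posSemidef_mul_one_sub_mul_one_sub_mul [DecidableEq n] {P Q : Matrix n n R}
    (hP : P.IsHermitian) (hQ : Q.IsHermitian) :
    (P * (1 - Q) * ((1 - Q) * P)).PosSemidef := by
  have h := posSemidef_self_mul_conjTranspose (P * (1 - Q))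
  rwa [conjTranspose_mul, conjTranspose_sub, conjTranspose_one, hP.eq, hQ.eq] at h

end Matrix

theorem stmt_2_general {m : ℕ} (P₁ P₂ : Matrix (Fin m) (Fin m) ℂ)
    (h₁ : P₁.IsHermitian) (h₁' : P₁ * P₁ = P₁)
    (h₂ : P₂.IsHermitian) (h₂' : P₂ * P₂ = P₂)
    (α : ℝ) (hα1 : α ≤ 1) :
    (((1 / 2 : ℝ) : ℂ) • P₁ + P₂ -
      (((α / 2 : ℝ) : ℂ) • P₁ +
        (((1 - α) / (3 - α) : ℝ) : ℂ) • ((1 - P₁) * P₂ * (1 - P₁)))).PosSemidef := by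
  simp only [← Complex.coe_algebraMap, algebraMap_smul]
  rw [IsIdempotentElem.half_smul_add_sub_eq h₁' h₂' (by linarith)]
  have hY : ((1 - α) • P₁ + (2 : ℝ) • P₂).IsHermitian :=
    (h₁.smul (.all _)).add (h₂.smul (.all _))
  exact .add (hY.posSemidef_mul_self.smul (inv_nonneg.mpr (by linarith)))
    ((posSemidef_mul_one_sub_mul_one_sub_mul h₁ h₂).smul (div_nonneg (by linarith) (by linarith)))

theorem stmt_2 {m : ℕ} (P₁ P₂ : Matrix (Fin m) (Fin m) ℂ)
    (h₁ : P₁.IsHermitian) (h₁' : P₁ * P₁ = P₁)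
    (h₂ : P₂.IsHermitian) (h₂' : P₂ * P₂ = P₂)
    (α : ℝ) (hα0 : 0 ≤ α) (hα1 : α ≤ 1) :
    (((1 / 2 : ℝ) : ℂ) • P₁ + P₂ -
      (((α / 2 : ℝ) : ℂ) • P₁ +
        (((1 - α) / (3 - α) : ℝ) : ℂ) • ((1 - P₁) * P₂ * (1 - P₁)))).PosSemidef :=
  stmt_2_general P₁ P₂ h₁ h₁' h₂ h₂' α hα1
end
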